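/- arXiv:1704.02800 — 3 statements merged into one kernel-verified Lean document; each statement's English description precedes it below -/
import Mathlib

section
/- Let d ≥ 2 and let (Γ,γ) be a (d+1)-colored graph of order 2p. Then ω_G(Γ) = ((d−1)!/2)·( d + (d/2)(d−1)p − Σ_{{r,s}} g_{rs} ), where the sum ranges over all unordered pairs {r,s} of distinct colors in Δ_d. Consequently, for d ≥ 3 the G-degree of any (d+1)-colored graph is a non-negative integer multiple of (d−1)!/2. -/
/-!
Basic framework: edge-colored graphs à la crystallization theory.

A `(d+1)`-colored graph (finite connected multigraph, regular of degree `d+1`, with a proper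
edge-coloring by the color set `C`, `#C = d+1`) is encoded by giving, for each color `c`,
the perfect matching formed by the `c`-colored edges, i.e. a fixed-point-free involution
`inv c` on the vertex set `V` (connectedness is the separate predicate `Conn`).
-/

structure CGraph (C V : Type) where
  inv : C → V → V
  invol : ∀ c v, inv c (inv c v) = v
  no_fixed : ∀ c v, inv c v ≠ v

namespace CGraph

variable {C V : Type}

/-- `g G B` = number of connected components of the spanning subgraph `Γ_B` consisting of
the edges whose color lies in `B`. -/
noncomputable def g (G : CGraph C V) (B : Set C) : ℕ :=
  Nat.card (Quotient (Relation.EqvGen.setoid (fun v w : V => ∃ c ∈ B, G.inv c v = w)))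

/-- connectedness of the colored graph -/
def Conn (G : CGraph C V) : Prop := G.g Set.univ = 1

/-- the spanning subgraph `Γ_B` of edges colored in `B`, as a colored graph with color set `B` -/
def restrict (G : CGraph C V) (B : Set C) : CGraph B V where
  inv c v := G.inv c.val v
  invol c v := G.invol c.val v
  no_fixed c v := G.no_fixed c.val v

/-- reachability in the colored graph -/
def reach (G : CGraph C V) : V → V → Prop :=
  Relation.EqvGen (fun v w : V => ∃ c, G.inv c v = w)

/-- the connected component of `G` containing `v0`, as a colored graph on the vertices
reachable from `v0` -/
def component (G : CGraph C V) (v0 : V) : CGraph C {w : V // G.reach v0 w} where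
  inv c w := ⟨G.inv c w.val,
    Relation.EqvGen.trans _ _ _ w.property (Relation.EqvGen.rel _ _ ⟨c, rfl⟩)⟩
  invol c w := Subtype.ext (G.invol c w.val)
  no_fixed c w h := G.no_fixed c w.val (congrArg Subtype.val h)

/-- A cyclic permutation of the (finite) color set: a permutation consisting of a single cycle
through all the colors.  Cyclic permutations `ε = (ε_0, …, ε_d)` of the color set, up to
rotation, correspond bijectively to such permutations `σ` (via `σ : ε_j ↦ ε_{j+1}`), and
taking the inverse cyclic permutation corresponds to `σ ↦ σ⁻¹`. -/
def IsCyclicPerm (σ : Equiv.Perm C) : Prop := σ.IsCycle ∧ ∀ c, σ c ≠ c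

/-- Euler characteristic `χ_σ(Γ) = Σ_{j} g_{ε_j ε_{j+1}} + (1-(n-1))·p` of the surface of the
regular embedding associated with the cyclic permutation `σ`; here `n = #C`, the graph has
order `2p` (i.e. `p = (#V)/2`), and the consecutive pairs `{ε_j, ε_{j+1}}` are exactly the
pairs `{c, σ c}`, `c ∈ C`. -/
noncomputable def chi (G : CGraph C V) (σ : Equiv.Perm C) : ℚ :=
  (∑ᶠ c : C, (G.g {c, σ c} : ℚ)) +
    (2 - (Nat.card C : ℚ)) * ((Nat.card V : ℚ) / 2)

/-- the genus `ρ_σ` of the regular embedding associated with `σ`: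
for a connected graph it is `(2 - χ_σ)/2`; in general (`g G Set.univ` connected components)
it is the sum of the genera of the connected components, matching the convention that the
genus/G-degree of a disconnected colored graph is the sum over its connected components. -/
noncomputable def rho (G : CGraph C V) (σ : Equiv.Perm C) : ℚ :=
  (2 * (G.g Set.univ : ℚ) - G.chi σ) / 2

/-- the Gurau degree `ω_G(Γ) = Σ ρ_ε(Γ)`, the sum over the cyclic permutations of the color
set up to inverse; each class `{σ, σ⁻¹}` has `ρ_σ = ρ_{σ⁻¹}`, whence the division by `2`. -/
noncomputable def omegaG (G : CGraph C V) : ℚ :=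
  (∑ᶠ σ : {σ : Equiv.Perm C // IsCyclicPerm σ}, G.rho σ.val) / 2

/-- bipartiteness -/
def Bipartite (G : CGraph C V) : Prop := ∃ f : V → Bool, ∀ c v, f (G.inv c v) ≠ f v

/-- color-preserving isomorphism of colored graphs -/
def IsIso {V' : Type} (G : CGraph C V) (G' : CGraph C V') : Prop :=
  ∃ e : V ≃ V', ∀ c v, e (G.inv c v) = G'.inv c (e v)

end CGraph

/-!
Summing `ρ_σ` over the cyclic permutations `σ`, each ordered pair `(r, s)` of distinct colours is a
step `c ↦ σ c` of exactly `(d - 1)!` of the `d!` cyclic permutations (conjugation by a transposition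
fixing `r` permutes these fibres), which gives the formula. The sum over ordered pairs is even, so
the bracket is an integer, and it is non-negative because every `ρ_σ` is.

`ρ_σ ≥ 0` is the bound `Σ_c g_{c,σc} ≤ (d - 1) p + 2`. Along the cycle `(ε_0, …, ε_d)` of `σ`,
the products `γ_{ε_j} γ_{ε_{j+1}}` of consecutive colour involutions multiply to `1`, the `j`-th
one has `2 g_{ε_j ε_{j+1}}` cycles, and together they connect any two vertices joined by a walk of
even length, so they have at most two orbits. Writing each product as a minimal word of
transpositions reduces the bound to how a single transposition changes the number of cycles.
-/

theorem even_sum_sum_ite_of_symm {ι : Type*} [Fintype ι] [LinearOrder ι] (f : ι → ι → ℕ)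
    (hf : ∀ i j, f i j = f j i) : Even (∑ i, ∑ j, if i = j then 0 else f i j) := by
  have hsplit : ∀ i j, (if i = j then 0 else f i j) =
      (if i < j then f i j else 0) + (if j < i then f i j else 0) := by
    intro i j
    rcases lt_trichotomy i j with h | rfl | h
    · simp [h, h.ne, h.not_gt]
    · simp
    · simp [h, h.ne', h.not_gt]
  have hswap : ∑ i, ∑ j, (if j < i then f i j else 0) = ∑ i, ∑ j, (if i < j then f i j else 0) := by
    rw [Finset.sum_comm]
    simp_rw [hf]
  simp_rw [hsplit, Finset.sum_add_distrib, hswap]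
  exact ⟨_, rfl⟩

namespace Relation

variable {α : Type*} {r p : α → α → Prop}

noncomputable def numClasses (r : α → α → Prop) : ℕ :=
  Nat.card (Quotient (EqvGen.setoid r))

def addEdge (r : α → α → Prop) (a b : α) : α → α → Prop :=
  fun x y => r x y ∨ (x = a ∧ y = b)

theorem EqvGen.of_forall_eqvGen (h : ∀ x y, r x y → EqvGen p x y) {x y : α}
    (hxy : EqvGen r x y) : EqvGen p x y :=
  EqvGen.eqvGen_le h x y hxy

theorem EqvGen.iff_of_forall {P : α → Prop} (h : ∀ x y, r x y → (P x ↔ P y)) {x y : α}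
    (hxy : EqvGen r x y) : P x ↔ P y := by
  induction hxy with
  | rel x y hxy => exact h x y hxy
  | refl x => rfl
  | symm x y _ ih => exact ih.symm
  | trans x y z _ _ ih₁ ih₂ => exact ih₁.trans ih₂

theorem EqvGen.map_of_forall {f : α → α} (h : ∀ x y, r x y → EqvGen r (f x) (f y)) {x y : α}
    (hxy : EqvGen r x y) : EqvGen r (f x) (f y) := by
  induction hxy with
  | rel x y hxy => exact h x y hxy
  | refl x => exact EqvGen.refl _
  | symm x y _ ih => exact EqvGen.symm _ _ ih
  | trans x y z _ _ ih₁ ih₂ => exact EqvGen.trans _ _ _ ih₁ ih₂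

theorem numClasses_le_of_forall [Finite α] (h : ∀ x y, r x y → EqvGen p x y) :
    numClasses p ≤ numClasses r :=
  Nat.card_le_card_of_surjective
    (Quotient.map' id fun _ _ hxy => EqvGen.of_forall_eqvGen h hxy)
    (by rintro ⟨x⟩; exact ⟨Quotient.mk _ x, rfl⟩)

theorem numClasses_eq_of_forall (h₁ : ∀ x y, r x y → EqvGen p x y)
    (h₂ : ∀ x y, p x y → EqvGen r x y) : numClasses r = numClasses p := by
  have : EqvGen.setoid r = EqvGen.setoid p := Setoid.ext fun _ _ =>
    ⟨EqvGen.of_forall_eqvGen h₁, EqvGen.of_forall_eqvGen h₂⟩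
  rw [numClasses, numClasses, this]

theorem mem_cons_eq_addEdge (a b : α) (l : List (α × α)) :
    (fun x y => (x, y) ∈ (a, b) :: l) = addEdge (fun x y => (x, y) ∈ l) a b := by
  ext x y
  simp [addEdge, or_comm]

theorem EqvGen.addEdge_cases {a b x y : α} (h : EqvGen (addEdge r a b) x y) :
    EqvGen r x y ∨ (EqvGen r x a ∧ EqvGen r b y) ∨ (EqvGen r x b ∧ EqvGen r a y) := by
  have E := EqvGen.is_equivalence r
  refine (EqvGen.iff_of_forall (P := fun z => EqvGen r x z ∨ (EqvGen r x a ∧ EqvGen r b z) ∨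
    (EqvGen r x b ∧ EqvGen r a z)) ?_ h).1 (Or.inl (E.refl x))
  rintro z w (hzw | ⟨rfl, rfl⟩)
  · have hzw := EqvGen.rel _ _ hzw
    constructor
    · rintro (h | ⟨h₁, h₂⟩ | ⟨h₁, h₂⟩)
      exacts [Or.inl (E.trans h hzw), Or.inr (Or.inl ⟨h₁, E.trans h₂ hzw⟩),
        Or.inr (Or.inr ⟨h₁, E.trans h₂ hzw⟩)]
    · rintro (h | ⟨h₁, h₂⟩ | ⟨h₁, h₂⟩)
      exacts [Or.inl (E.trans h (E.symm hzw)), Or.inr (Or.inl ⟨h₁, E.trans h₂ (E.symm hzw)⟩),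
        Or.inr (Or.inr ⟨h₁, E.trans h₂ (E.symm hzw)⟩)]
  · have := E.refl z
    have := E.refl w
    tauto

theorem numClasses_addEdge_of_eqvGen {a b : α} (h : EqvGen r a b) :
    numClasses (addEdge r a b) = numClasses r :=
  numClasses_eq_of_forall
    (by rintro x y (hxy | ⟨rfl, rfl⟩); exacts [EqvGen.rel _ _ hxy, h])
    (fun x y hxy => EqvGen.rel _ _ (Or.inl hxy))

theorem numClasses_addEdge_add_one [Finite α] {a b : α} (h : ¬EqvGen r a b) :
    numClasses (addEdge r a b) + 1 = numClasses r := by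
  have E := EqvGen.is_equivalence r
  let f : Quotient (EqvGen.setoid r) → Quotient (EqvGen.setoid (addEdge r a b)) :=
    Quotient.map' id fun x y hxy => EqvGen.of_forall_eqvGen
      (fun _ _ h => EqvGen.rel _ _ (Or.inl h)) hxy
  let s : Set (Quotient (EqvGen.setoid r)) := Set.univ \ {Quotient.mk _ b}
  have hinj : Set.InjOn f s := by
    rintro ⟨x⟩ hx ⟨y⟩ hy hxy
    replace hx : ¬EqvGen r x b := fun h' => hx.2 (Quotient.sound h')
    replace hy : ¬EqvGen r y b := fun h' => hy.2 (Quotient.sound h')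
    refine Quotient.sound ?_
    rcases EqvGen.addEdge_cases (Quotient.exact hxy) with h' | ⟨_, h'⟩ | ⟨h', _⟩
    exacts [h', absurd (E.symm h') hy, absurd h' hx]
  have himage : f '' s = Set.univ := by
    refine Set.eq_univ_of_forall ?_
    rintro ⟨x⟩
    by_cases hx : EqvGen r x b
    · refine ⟨Quotient.mk _ a, ⟨trivial, fun h' => h (Quotient.exact h')⟩, Quotient.sound ?_⟩
      exact EqvGen.trans _ _ _ (EqvGen.rel _ _ (Or.inr ⟨rfl, rfl⟩))
        (EqvGen.of_forall_eqvGen (fun _ _ h => EqvGen.rel _ _ (Or.inl h)) (E.symm hx))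
    · exact ⟨Quotient.mk _ x, ⟨trivial, fun h' => hx (Quotient.exact h')⟩, rfl⟩
  rw [numClasses, numClasses, ← Set.ncard_univ, ← himage, hinj.ncard_image,
    ← Set.ncard_univ, Set.ncard_sdiff_singleton_add_one (Set.mem_univ _)]

theorem numClasses_le_numClasses_addEdge_add_one [Finite α] (a b : α) :
    numClasses r ≤ numClasses (addEdge r a b) + 1 := by
  by_cases h : EqvGen r a b
  · rw [numClasses_addEdge_of_eqvGen h]; omega
  · rw [numClasses_addEdge_add_one h]

theorem eqvGen_addEdge_swap [DecidableEq α] (a b z : α) :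
    EqvGen (addEdge r a b) z (Equiv.swap a b z) := by
  rcases eq_or_ne z a with rfl | ha
  · rw [Equiv.swap_apply_left]; exact EqvGen.rel _ _ (Or.inr ⟨rfl, rfl⟩)
  rcases eq_or_ne z b with rfl | hb
  · rw [Equiv.swap_apply_right]; exact EqvGen.symm _ _ (EqvGen.rel _ _ (Or.inr ⟨rfl, rfl⟩))
  rw [Equiv.swap_apply_of_ne_of_ne ha hb]; exact EqvGen.refl _

end Relation

namespace Equiv.Perm

open Relation

variable {α : Type*}

-- Fixed points count as cycles, unlike in `Equiv.Perm.cycleType`.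
noncomputable def numCycles (π : Perm α) : ℕ :=
  numClasses fun x y => π x = y

theorem SameCycle.eqvGen_of_forall {r : α → α → Prop} {π : Perm α} (h : ∀ x, EqvGen r x (π x))
    {x y : α} (hxy : π.SameCycle x y) : EqvGen r x y := by
  obtain ⟨i, rfl⟩ := hxy
  induction i using Int.induction_on with
  | zero => exact EqvGen.refl x
  | succ i ih =>
    rw [add_comm, zpow_one_add, mul_apply]
    exact EqvGen.trans _ _ _ ih (h _)
  | pred i ih =>
    have hstep := h ((π ^ (-(i : ℤ) - 1)) x)
    rw [← mul_apply, ← zpow_one_add, add_sub_cancel] at hstep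
    exact EqvGen.trans _ _ _ ih (EqvGen.symm _ _ hstep)

theorem eqvGen_apply_eq_iff_sameCycle {π : Perm α} {x y : α} :
    EqvGen (fun x y => π x = y) x y ↔ π.SameCycle x y :=
  ⟨fun h => (Equivalence.eqvGen_iff (SameCycle.equivalence π)).1
      (EqvGen.mono (fun x _ hxy => ⟨1, by rw [zpow_one, hxy]⟩) x y h),
    SameCycle.eqvGen_of_forall fun _ => EqvGen.rel _ _ rfl⟩

theorem numCycles_eq_card_quotient (π : Perm α) :
    numCycles π = Nat.card (Quotient (SameCycle.setoid π)) := by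
  have : EqvGen.setoid (fun x y => π x = y) = SameCycle.setoid π :=
    Setoid.ext fun _ _ => eqvGen_apply_eq_iff_sameCycle
  rw [numCycles, numClasses, this]

theorem numCycles_one : numCycles (1 : Perm α) = Nat.card α := by
  rw [numCycles_eq_card_quotient]
  refine (Nat.card_eq_of_bijective (Quotient.mk (SameCycle.setoid 1))
    ⟨fun x y hxy => ?_, Quotient.mk_surjective⟩).symm
  exact sameCycle_one.1 (Quotient.exact hxy)

section Swap

variable [DecidableEq α]

theorem numClasses_addEdge_swap_mul (ρ : Perm α) (a b : α) :
    numClasses (addEdge (fun x y => (swap a b * ρ) x = y) a b) =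
      numClasses (addEdge (fun x y => ρ x = y) a b) := by
  refine numClasses_eq_of_forall ?_ ?_
  · rintro x _ (rfl | ⟨rfl, rfl⟩)
    · exact EqvGen.trans _ _ _ (EqvGen.rel _ _ (Or.inl rfl)) (eqvGen_addEdge_swap a b _)
    · exact EqvGen.rel _ _ (Or.inr ⟨rfl, rfl⟩)
  · rintro x _ (rfl | ⟨rfl, rfl⟩)
    · have := eqvGen_addEdge_swap (r := fun x y => (swap a b * ρ) x = y) a b (swap a b (ρ x))
      rw [swap_apply_self] at this
      exact EqvGen.trans _ _ _ (EqvGen.rel _ _ (Or.inl rfl)) this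
    · exact EqvGen.rel _ _ (Or.inr ⟨rfl, rfl⟩)

theorem numCycles_swap_mul_le [Finite α] (ρ : Perm α) (a b : α) :
    numCycles (swap a b * ρ) ≤ numCycles ρ + 1 := by
  have h₁ := numClasses_le_numClasses_addEdge_add_one (r := fun x y => (swap a b * ρ) x = y) a b
  have h₂ : numClasses (addEdge (fun x y => ρ x = y) a b) ≤ numCycles ρ :=
    numClasses_le_of_forall fun x y hxy => EqvGen.rel _ _ (Or.inl hxy)
  rw [numClasses_addEdge_swap_mul] at h₁
  exact h₁.trans (by omega)

theorem sameCycle_swap_mul_of_not_sameCycle [Finite α] {ρ : Perm α} {a b : α}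
    (h : ¬ρ.SameCycle a b) : (swap a b * ρ).SameCycle a b := by
  set τ := swap a b * ρ
  set c := ρ⁻¹ b
  -- walking backwards along the `ρ`-cycle of `b`, `τ` agrees with `ρ` until it reaches `c`,
  -- which `τ` sends to `a`
  have hwalk : ∀ i : ℕ, τ.SameCycle ((ρ⁻¹ ^ i) c) a := by
    intro i
    induction i with
    | zero => exact ⟨1, by simp [τ, c]⟩
    | succ i ih =>
      set z := (ρ⁻¹ ^ (i + 1)) c
      have hz : ρ z = (ρ⁻¹ ^ i) c := by
        simp [z, pow_succ']
      by_cases hzc : z = c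
      · rw [hzc]; exact ⟨1, by simp [τ, c]⟩
      have hb : ρ z ≠ b := fun h' => hzc (by simp [c, ← h'])
      have hbz : ρ.SameCycle b ((ρ⁻¹ ^ i) c) :=
        sameCycle_inv.1 (sameCycle_pow_right.2 (sameCycle_apply_right.2 SameCycle.rfl))
      have ha : ρ z ≠ a := fun h' => h (by rw [← h', hz]; exact hbz.symm)
      have hτz : τ z = ρ z := by
        simp only [τ, mul_apply, swap_apply_of_ne_of_ne ha hb]
      rw [← sameCycle_apply_left, hτz, hz]
      exact ih
  obtain ⟨i, hi⟩ := (sameCycle_inv.2 ⟨1, by simp [c]⟩ : (ρ⁻¹).SameCycle c b).exists_nat_pow_eq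
  exact (hi ▸ hwalk i).symm

theorem numCycles_swap_mul_add_one [Finite α] {ρ : Perm α} {a b : α} (h : ¬ρ.SameCycle a b) :
    numCycles (swap a b * ρ) + 1 = numCycles ρ := by
  rw [numCycles, ← numClasses_addEdge_of_eqvGen
      (eqvGen_apply_eq_iff_sameCycle.2 (sameCycle_swap_mul_of_not_sameCycle h)),
    numClasses_addEdge_swap_mul, numClasses_addEdge_add_one (mt eqvGen_apply_eq_iff_sameCycle.1 h),
    numCycles]

def swapProd (l : List (α × α)) : Perm α :=
  (l.map fun p => swap p.1 p.2).prod

@[simp]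
theorem swapProd_nil : swapProd ([] : List (α × α)) = 1 := rfl

@[simp]
theorem swapProd_cons (a b : α) (l : List (α × α)) :
    swapProd ((a, b) :: l) = swap a b * swapProd l := rfl

theorem swapProd_append (l₁ l₂ : List (α × α)) :
    swapProd (l₁ ++ l₂) = swapProd l₁ * swapProd l₂ := by
  simp [swapProd]

theorem eqvGen_swapProd_apply (l : List (α × α)) (x : α) :
    EqvGen (fun x y => (x, y) ∈ l) x (swapProd l x) := by
  induction l generalizing x with
  | nil => exact EqvGen.refl x
  | cons p l ih =>
    obtain ⟨a, b⟩ := p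
    rw [mem_cons_eq_addEdge, swapProd_cons, mul_apply]
    exact EqvGen.trans _ _ _ (EqvGen.mono (fun _ _ h => Or.inl h) _ _ (ih x))
      (eqvGen_addEdge_swap a b _)

/-- Each letter either joins two classes of the relation spanned by the letters after it, and
then it merges two cycles, or it changes the number of cycles by at most one. -/
theorem numCycles_swapProd_add_card_le [Finite α] (l : List (α × α)) :
    numCycles (swapProd l) + Nat.card α ≤ l.length + 2 * numClasses (fun x y => (x, y) ∈ l) := by
  induction l with
  | nil =>
    have : numClasses (fun x y => (x, y) ∈ ([] : List (α × α))) = numCycles (1 : Perm α) :=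
      numClasses_eq_of_forall (by simp) (by rintro x _ rfl; exact EqvGen.refl x)
    rw [this, swapProd_nil, numCycles_one]
    omega
  | cons p l ih =>
    obtain ⟨a, b⟩ := p
    rw [swapProd_cons, mem_cons_eq_addEdge, List.length_cons]
    by_cases h : EqvGen (fun x y => (x, y) ∈ l) a b
    · have := numCycles_swap_mul_le (swapProd l) a b
      rw [numClasses_addEdge_of_eqvGen h]
      omega
    · have hρ : ¬(swapProd l).SameCycle a b := fun h' =>
        h (h'.eqvGen_of_forall (eqvGen_swapProd_apply l))
      have := numCycles_swap_mul_add_one hρ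
      have := numClasses_addEdge_add_one h
      omega

theorem exists_swapProd_eq [Finite α] (π : Perm α) :
    ∃ l : List (α × α), swapProd l = π ∧ l.length + numCycles π = Nat.card α := by
  cases nonempty_fintype α
  obtain ⟨n, hn⟩ : ∃ n, π.support.card = n := ⟨_, rfl⟩
  induction n using Nat.strong_induction_on generalizing π with
  | _ n ih =>
    by_cases hπ : π = 1
    · exact ⟨[], by simp [hπ], by simp [hπ, numCycles_one]⟩
    obtain ⟨a, ha⟩ : ∃ a, π a ≠ a := not_forall.1 fun h => hπ (Equiv.ext h)
    obtain ⟨l, hl, hlen⟩ := ih _ (hn ▸ card_support_swap_mul ha) (swap a (π a) * π) rfl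
    have hfix : (swap a (π a) * π).SameCycle a (π a) → a = π a := fun h =>
      h.eq_of_left (by simp [Function.IsFixedPt])
    have hmerge := numCycles_swap_mul_add_one (mt hfix ha.symm)
    rw [swap_mul_self_mul] at hmerge
    refine ⟨(a, π a) :: l, by rw [swapProd_cons, hl, swap_mul_self_mul], ?_⟩
    rw [List.length_cons]
    omega

theorem exists_swapProd_eq_prod [Finite α] (L : List (Perm α)) :
    ∃ l : List (α × α), swapProd l = L.prod ∧
      l.length + (L.map numCycles).sum = L.length * Nat.card α ∧
      ∀ π ∈ L, ∀ x, EqvGen (fun x y => (x, y) ∈ l) x (π x) := by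
  induction L with
  | nil => exact ⟨[], rfl, by simp, by simp⟩
  | cons π L ih =>
    obtain ⟨l, hl, hlen, hspan⟩ := ih
    obtain ⟨l₀, hl₀, hlen₀⟩ := exists_swapProd_eq π
    refine ⟨l₀ ++ l, by rw [swapProd_append, hl₀, hl, List.prod_cons], ?_, ?_⟩
    · simp only [List.length_append, List.map_cons, List.sum_cons, List.length_cons,
        Nat.succ_mul]
      omega
    · rintro π' hπ' x
      rcases List.mem_cons.1 hπ' with rfl | hπ'
      · exact EqvGen.mono (fun _ _ h => List.mem_append_left _ h) _ _
          (hl₀ ▸ eqvGen_swapProd_apply l₀ x)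
      · exact EqvGen.mono (fun _ _ h => List.mem_append_right _ h) _ _ (hspan π' hπ' x)

end Swap

theorem numCycles_prod_add_le [Finite α] (L : List (Perm α)) :
    numCycles L.prod + Nat.card α + (L.map numCycles).sum ≤
      L.length * Nat.card α + 2 * numClasses (fun x y => ∃ π ∈ L, π x = y) := by
  classical
  obtain ⟨l, hl, hlen, hspan⟩ := exists_swapProd_eq_prod L
  have h₁ := numCycles_swapProd_add_card_le l
  have h₂ : numClasses (fun x y => (x, y) ∈ l) ≤ numClasses (fun x y => ∃ π ∈ L, π x = y) :=
    numClasses_le_of_forall fun x _ ⟨π, hπ, hx⟩ => hx ▸ hspan π hπ x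
  rw [hl] at h₁
  omega

end Equiv.Perm

namespace CGraph

open Relation Equiv Equiv.Perm

section Graph

variable {C V : Type}

theorem Conn.eqvGen {G : CGraph C V} (hconn : G.Conn) (v w : V) :
    EqvGen (fun v w => ∃ c ∈ (Set.univ : Set C), G.inv c v = w) v w :=
  Quotient.exact ((Nat.card_eq_one_iff_unique.1 hconn).1.elim _ _)

theorem Conn.nonempty {G : CGraph C V} (hconn : G.Conn) : Nonempty V := by
  obtain ⟨q⟩ := (Nat.card_eq_one_iff_unique.1 hconn).2
  exact ⟨q.out⟩

variable (G : CGraph C V)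

def perm (c : C) : Perm V :=
  ⟨G.inv c, G.inv c, G.invol c, G.invol c⟩

@[simp]
theorem perm_apply (c : C) (v : V) : G.perm c v = G.inv c v := rfl

theorem perm_mul_self (c : C) : G.perm c * G.perm c = 1 :=
  Equiv.ext (G.invol c)

theorem perm_inv (c : C) : (G.perm c)⁻¹ = G.perm c :=
  inv_eq_of_mul_eq_one_right (G.perm_mul_self c)

section TwoColors

variable (r s : C)

theorem perm_mul_perm_conj :
    G.perm r * (G.perm r * G.perm s) * (G.perm r)⁻¹ = (G.perm r * G.perm s)⁻¹ := by
  rw [mul_inv_rev, perm_inv, perm_inv, ← mul_assoc, perm_mul_self, one_mul]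

theorem not_sameCycle_perm_mul_perm_perm_self (v : V) :
    ¬(G.perm r * G.perm s).SameCycle v (G.perm r v) := by
  set T := G.perm r * G.perm s
  rintro ⟨i, hi⟩
  have hconj : ∀ j : ℤ, G.perm r * T ^ j = T ^ (-j) * G.perm r := fun j => by
    rw [zpow_neg, ← inv_zpow, ← perm_mul_perm_conj, conj_zpow, perm_inv, mul_assoc, mul_assoc,
      perm_mul_self, mul_one]
  -- if `i = 2 j + k`, then `perm r * T ^ k` fixes `(T ^ j) v`; for `k = 0, 1` this is the
  -- fixed-point-free `perm r`, resp. `perm s`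
  have hfix : ∀ j k : ℤ, i = 2 * j + k → (G.perm r * T ^ k) ((T ^ j) v) = (T ^ j) v := by
    rintro j k rfl
    rw [← mul_apply, mul_assoc, ← zpow_add, hconj, mul_apply, ← hi, ← mul_apply, ← zpow_add]
    congr 2
    ring
  obtain ⟨j, hj | hj⟩ := Int.even_or_odd' i
  · exact G.no_fixed r _ (by simpa using hfix j 0 (by rw [hj, add_zero]))
  · refine G.no_fixed s ((T ^ j) v) ?_
    have := hfix j 1 hj
    rwa [zpow_one, ← mul_assoc, perm_mul_self, one_mul] at this

theorem eqvGen_pair_iff {x y : V} :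
    EqvGen (fun v w => ∃ c ∈ ({r, s} : Set C), G.inv c v = w) x y ↔
      (G.perm r * G.perm s).SameCycle x y ∨
        (G.perm r * G.perm s).SameCycle x (G.perm r y) := by
  set T := G.perm r * G.perm s
  have hTsymm : ∀ z, T.symm (G.inv r z) = G.inv s z := fun z => by
    rw [T.symm_apply_eq]
    simp [T, G.invol]
  constructor
  · refine fun h => (EqvGen.iff_of_forall
      (P := fun z => T.SameCycle x z ∨ T.SameCycle x (G.perm r z)) ?_ h).1 (Or.inl .rfl)
    rintro z _ ⟨c, hc | hc, rfl⟩ <;> rw [Set.mem_singleton_iff.1 hc] <;>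
      simp only [perm_apply] at *
    · rw [G.invol, or_comm]
    · rw [show G.inv r (G.inv s z) = T z from rfl, ← hTsymm, sameCycle_apply_right,
        sameCycle_symm_apply_right, or_comm]
  · have hstep : ∀ z, EqvGen (fun v w => ∃ c ∈ ({r, s} : Set C), G.inv c v = w) z (T z) :=
      fun z => EqvGen.trans _ _ _ (EqvGen.rel _ _ ⟨s, by simp, rfl⟩)
        (EqvGen.rel _ _ ⟨r, by simp, rfl⟩)
    rintro (h | h)
    · exact h.eqvGen_of_forall hstep
    · exact EqvGen.trans _ _ _ (h.eqvGen_of_forall hstep)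
        (EqvGen.symm _ _ (EqvGen.rel _ _ ⟨r, by simp, rfl⟩))

theorem numCycles_perm_mul_perm [Finite V] :
    numCycles (G.perm r * G.perm s) = 2 * G.g {r, s} := by
  classical
  set T := G.perm r * G.perm s
  let φ : Quotient (SameCycle.setoid T) →
      Quotient (EqvGen.setoid fun v w => ∃ c ∈ ({r, s} : Set C), G.inv c v = w) :=
    Quotient.map' id fun _ _ h => (G.eqvGen_pair_iff r s).2 (Or.inl h)
  have := Fintype.ofFinite (Quotient (SameCycle.setoid T))
  have := Fintype.ofFinite
    (Quotient (EqvGen.setoid fun v w => ∃ c ∈ ({r, s} : Set C), G.inv c v = w))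
  have hfiber : ∀ q, (Finset.univ.filter fun t => φ t = q).card = 2 := by
    refine Quotient.ind fun v => Finset.card_eq_two.2 ⟨⟦v⟧, ⟦G.perm r v⟧,
      fun h => G.not_sameCycle_perm_mul_perm_perm_self r s v (Quotient.exact h), ?_⟩
    ext t
    induction t using Quotient.ind with | _ w => ?_
    simp only [Finset.mem_filter, Finset.mem_univ, true_and, Finset.mem_insert,
      Finset.mem_singleton, φ, Quotient.map'_mk'', id, Quotient.eq]
    exact G.eqvGen_pair_iff r s
  rw [numCycles_eq_card_quotient, Nat.card_eq_fintype_card, ← Finset.card_univ,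
    Finset.card_eq_sum_card_fiberwise (f := φ) (t := Finset.univ) (fun _ _ => Finset.mem_univ _),
    Finset.sum_congr rfl fun q _ => hfiber q, Finset.sum_const, smul_eq_mul, mul_comm,
    Finset.card_univ, ← Nat.card_eq_fintype_card]
  rfl

end TwoColors

theorem numClasses_twoStep_le_two [Nonempty C] (hconn : G.Conn) :
    numClasses (fun x y => ∃ a b, G.inv a (G.inv b x) = y) ≤ 2 := by
  set E := fun x y => ∃ a b, G.inv a (G.inv b x) = y
  obtain ⟨c₀⟩ := ‹Nonempty C›
  obtain ⟨x₀⟩ := hconn.nonempty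
  have hconj : ∀ c x y, EqvGen E x y → EqvGen E (G.inv c x) (G.inv c y) := fun c _ _ =>
    EqvGen.map_of_forall fun x _ ⟨a, b, hab⟩ => hab ▸ EqvGen.trans _ _ _
      (EqvGen.rel _ _ ⟨b, c, by rw [G.invol]⟩) (EqvGen.rel _ _ ⟨c, a, rfl⟩)
  have hodd : ∀ c w z, EqvGen E w z → EqvGen E (G.inv c₀ w) (G.inv c z) := fun c w z h =>
    EqvGen.trans _ _ _ (hconj c₀ _ _ h) (EqvGen.rel _ _ ⟨c, c₀, by rw [G.invol]⟩)
  have hcover : ∀ y, EqvGen E x₀ y ∨ EqvGen E (G.inv c₀ x₀) y := by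
    refine fun y => (EqvGen.iff_of_forall (P := fun y => EqvGen E x₀ y ∨
      EqvGen E (G.inv c₀ x₀) y) ?_ (hconn.eqvGen x₀ y)).1 (Or.inl (EqvGen.refl _))
    rintro z _ ⟨c, -, rfl⟩
    have hback : ∀ w, EqvGen E w (G.inv c z) → EqvGen E (G.inv c₀ w) z := fun w h => by
      simpa only [G.invol] using hodd c w _ h
    constructor
    · rintro (h | h)
      · exact Or.inr (hodd c _ _ h)
      · exact Or.inl (by simpa only [G.invol] using hodd c _ _ h)
    · rintro (h | h)
      · exact Or.inr (hback _ h)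
      · exact Or.inl (by simpa only [G.invol] using hback _ h)
  calc numClasses E ≤ Nat.card Bool := by
        refine Nat.card_le_card_of_surjective
          (fun b => if b then ⟦x₀⟧ else ⟦G.inv c₀ x₀⟧) (Quotient.ind fun y => ?_)
        rcases hcover y with h | h
        exacts [⟨true, Quotient.sound h⟩, ⟨false, Quotient.sound h⟩]
    _ = 2 := by simp

theorem numClasses_consecutive_le_two [Nonempty C] [Finite V] (hconn : G.Conn) {u : ℕ → C}
    {n : ℕ} (hu : ∀ c, ∃ i < n, u i = c) :
    numClasses (fun x y => ∃ j < n, G.inv (u j) (G.inv (u (j + 1)) x) = y) ≤ 2 := by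
  set U := fun x y => ∃ j < n, G.inv (u j) (G.inv (u (j + 1)) x) = y
  have hchain : ∀ k ≤ n, ∀ i ≤ k, ∀ x, EqvGen U x (G.inv (u i) (G.inv (u k) x)) := by
    intro k
    induction k with
    | zero => rintro - i hi x; rw [Nat.le_zero.1 hi, G.invol]; exact EqvGen.refl x
    | succ k ih =>
      rintro hk i hi x
      rcases hi.eq_or_lt with rfl | hi
      · rw [G.invol]; exact EqvGen.refl x
      have := ih (by omega) i (by omega) (G.inv (u k) (G.inv (u (k + 1)) x))
      rw [G.invol] at this
      exact EqvGen.trans _ _ _ (EqvGen.rel _ _ ⟨k, by omega, rfl⟩) this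
  refine le_trans (numClasses_le_of_forall ?_) (G.numClasses_twoStep_le_two hconn)
  rintro x _ ⟨a, b, rfl⟩
  obtain ⟨i, hi, rfl⟩ := hu a
  obtain ⟨j, hj, rfl⟩ := hu b
  rcases le_total i j with hij | hji
  · exact hchain j hj.le i hij x
  · have := hchain i hi.le j hji (G.inv (u i) (G.inv (u j) x))
    rw [G.invol, G.invol] at this
    exact EqvGen.symm _ _ this

end Graph

section CyclicPerm

open Finset

variable {C : Type}

theorem IsCyclicPerm.conj {σ : Perm C} (hσ : IsCyclicPerm σ) (τ : Perm C) :
    IsCyclicPerm (τ * σ * τ⁻¹) :=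
  ⟨hσ.1.conj, fun c h => hσ.2 (τ⁻¹ c) ((eq_inv_iff_eq (f := τ)).2 h)⟩

variable [Fintype C]

theorem IsCyclicPerm.isCycleOn {σ : Perm C} (hσ : IsCyclicPerm σ) :
    σ.IsCycleOn (univ : Finset C) := by
  convert hσ.1.isCycleOn
  ext c
  simp [hσ.2 c]

theorem IsCyclicPerm.sum_range_pow_apply {M : Type*} [AddCommMonoid M] {σ : Perm C}
    (hσ : IsCyclicPerm σ) (c₀ : C) (f : C → M) :
    ∑ j ∈ range (Fintype.card C), f ((σ ^ j) c₀) = ∑ c, f c := by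
  have hcyc := hσ.isCycleOn
  refine sum_nbij (fun j => (σ ^ j) c₀) (fun _ _ => mem_univ _) ?_
    (fun c _ => by simpa using hcyc.exists_pow_eq (mem_univ c₀) (mem_univ c)) fun _ _ => rfl
  intro i hi j hj hij
  exact ((hcyc.pow_apply_eq_pow_apply (mem_univ _)).1 hij).eq_of_lt_of_lt
    (by simpa using hi) (by simpa using hj)

variable [DecidableEq C]

theorem isCyclicPerm_iff_cycleType {σ : Perm C} :
    IsCyclicPerm σ ↔ σ.cycleType = {Fintype.card C} := by
  constructor
  · intro hσ
    rw [hσ.1.cycleType, eq_univ_of_forall fun c => mem_support.2 (hσ.2 c), card_univ]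
  · intro h
    have hsupp : σ.support = univ := eq_univ_of_card _ (by rw [← sum_cycleType, h]; simp)
    exact ⟨card_cycleType_eq_one.1 (by simp [h]), fun c => mem_support.1 (hsupp ▸ mem_univ c)⟩

variable [DecidablePred (IsCyclicPerm : Perm C → Prop)]

theorem card_filter_isCyclicPerm (hC : 2 ≤ Fintype.card C) :
    #{σ : Perm C | IsCyclicPerm σ} = (Fintype.card C - 1).factorial := by
  simp_rw [isCyclicPerm_iff_cycleType]
  rw [card_of_cycleType]
  simp only [Multiset.sum_singleton, le_refl, Multiset.mem_singleton, forall_eq, hC, and_self,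
    if_true, Nat.sub_self, Nat.factorial_zero, one_mul, Multiset.prod_singleton,
    Multiset.toFinset_singleton, prod_singleton, Multiset.count_singleton_self, Nat.factorial_one,
    mul_one]
  exact Nat.div_eq_of_eq_mul_left (by omega) (by rw [mul_comm, Nat.mul_factorial_pred (by omega)])

theorem card_filter_isCyclicPerm_apply_eq_of_ne {c s s' : C} (hs : s ≠ c) (hs' : s' ≠ c) :
    #{σ : Perm C | IsCyclicPerm σ ∧ σ c = s} = #{σ : Perm C | IsCyclicPerm σ ∧ σ c = s'} := by
  have hmaps : ∀ {a b : C}, a ≠ c → b ≠ c → ∀ σ : Perm C, IsCyclicPerm σ ∧ σ c = a →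
      IsCyclicPerm (swap a b * σ * swap a b) ∧ (swap a b * σ * swap a b) c = b := by
    rintro a b ha hb σ ⟨hσ, hσc⟩
    refine ⟨by simpa using hσ.conj (swap a b), ?_⟩
    simp [mul_apply, swap_apply_of_ne_of_ne ha.symm hb.symm, hσc]
  have hinv : ∀ σ : Perm C, swap s s' * (swap s s' * σ * swap s s') * swap s s' = σ := fun σ => by
    simp [mul_assoc]
  refine card_nbij' (fun σ => swap s s' * σ * swap s s') (fun σ => swap s s' * σ * swap s s')
    (fun σ hσ => ?_) (fun σ hσ => ?_) (fun σ _ => hinv σ) (fun σ _ => hinv σ)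
  · simpa using hmaps hs hs' σ (by simpa using hσ)
  · simpa [swap_comm s s'] using hmaps hs' hs σ (by simpa using hσ)

theorem card_filter_isCyclicPerm_apply_eq {c s : C} (hcs : c ≠ s) :
    #{σ : Perm C | IsCyclicPerm σ ∧ σ c = s} = (Fintype.card C - 2).factorial := by
  have hC : 2 ≤ Fintype.card C := by
    simpa using card_le_univ ({c, s} : Finset C) |>.trans' (card_pair hcs).ge
  have htotal := card_filter_isCyclicPerm hC
  rw [card_eq_sum_card_fiberwise (f := fun σ => σ c) (t := univ) (by simp)] at htotal
  simp_rw [filter_filter] at htotal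
  rw [← sum_erase_add _ _ (mem_univ c), filter_eq_empty_iff.2 fun σ _ h => h.1.2 c h.2,
    card_empty, add_zero, sum_congr rfl fun s' hs' =>
      card_filter_isCyclicPerm_apply_eq_of_ne (ne_of_mem_erase hs') hcs.symm,
    sum_const, card_erase_of_mem (mem_univ c), card_univ, smul_eq_mul,
    show Fintype.card C - 1 = Fintype.card C - 2 + 1 by omega, Nat.factorial_succ] at htotal
  exact Nat.eq_of_mul_eq_mul_left (by omega) htotal

theorem sum_isCyclicPerm_sum_apply {M : Type*} [AddCommMonoid M] (f : C → C → M) :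
    ∑ σ with IsCyclicPerm σ, ∑ c, f c (σ c) =
      (Fintype.card C - 2).factorial • ∑ c, ∑ s, if c = s then 0 else f c s := by
  rw [sum_comm, smul_sum]
  refine sum_congr rfl fun c _ => ?_
  rw [← sum_fiberwise _ (fun σ => σ c), smul_sum]
  refine sum_congr rfl fun s _ => ?_
  rw [sum_congr rfl fun σ hσ => by rw [(mem_filter.1 hσ).2], sum_const, filter_filter]
  split_ifs with hcs
  · subst hcs
    rw [filter_eq_empty_iff.2 fun σ _ h => h.1 |>.2 c h.2, card_empty, zero_smul, smul_zero]
  · rw [card_filter_isCyclicPerm_apply_eq hcs]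

end CyclicPerm

section Genus

variable {C V : Type} [Fintype C] (G : CGraph C V)

theorem two_mul_sum_g_add_two_mul_card_le [Finite V] (hconn : G.Conn)
    {σ : Perm C} (hσ : IsCyclicPerm σ) :
    2 * ∑ c, G.g {c, σ c} + 2 * Nat.card V ≤ Fintype.card C * Nat.card V + 4 := by
  obtain ⟨c₀, -, -⟩ := hσ.1
  have hcyc := hσ.isCycleOn
  set n := Fintype.card C
  set u : ℕ → C := fun j => (σ ^ j) c₀
  set t : ℕ → Perm V := fun j => G.perm (u j) * G.perm (u (j + 1))
  set L := (List.range n).map t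
  have hu : ∀ j, u (j + 1) = σ (u j) := fun j => by simp [u, pow_succ']
  have hsurj : ∀ c, ∃ i < n, u i = c := fun c =>
    hcyc.exists_pow_eq (Finset.mem_univ c₀) (Finset.mem_univ c)
  have hprod : ∀ k, ((List.range k).map t).prod = G.perm (u 0) * G.perm (u k) := by
    intro k
    induction k with
    | zero => simp [perm_mul_self]
    | succ k ih =>
      rw [List.range_succ, List.map_append, List.prod_append, ih]
      simp [t, mul_assoc, ← mul_assoc (G.perm (u k)), perm_mul_self]
  have hL : L.prod = 1 := by
    rw [hprod, show u n = u 0 by simpa [u] using hcyc.pow_card_apply (Finset.mem_univ c₀),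
      perm_mul_self]
  have hsum : (L.map numCycles).sum = 2 * ∑ c, G.g {c, σ c} :=
    calc (L.map numCycles).sum = ∑ j ∈ Finset.range n, numCycles (t j) := by
          rw [List.map_map]; rfl
      _ = ∑ j ∈ Finset.range n, 2 * G.g {u j, σ (u j)} := by
          simp only [t, numCycles_perm_mul_perm, hu]
      _ = 2 * ∑ c, G.g {c, σ c} := by
          rw [← Finset.mul_sum, hσ.sum_range_pow_apply c₀ fun c => G.g {c, σ c}]
  have hclasses : numClasses (fun x y => ∃ π ∈ L, π x = y) ≤ 2 := by
    have : Nonempty C := ⟨c₀⟩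
    convert G.numClasses_consecutive_le_two hconn hsurj using 3
    simp [L, t]
  have := numCycles_prod_add_le L
  rw [hL, numCycles_one, hsum, List.length_map, List.length_range] at this
  omega

theorem rho_eq (hconn : G.Conn) (σ : Perm C) :
    G.rho σ = (2 + (Fintype.card C - 2) * Nat.card V / 2 - ∑ c, (G.g {c, σ c} : ℚ)) / 2 := by
  rw [rho, chi, finsum_eq_sum_of_fintype, show G.g Set.univ = 1 from hconn,
    Nat.card_eq_fintype_card (α := C)]
  ring

theorem rho_nonneg [Finite V] (hconn : G.Conn) {σ : Perm C} (hσ : IsCyclicPerm σ) :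
    0 ≤ G.rho σ := by
  have h : (2 * ∑ c, G.g {c, σ c} + 2 * Nat.card V : ℚ) ≤ Fintype.card C * Nat.card V + 4 := by
    exact_mod_cast G.two_mul_sum_g_add_two_mul_card_le hconn hσ
  push_cast at h
  rw [G.rho_eq hconn]
  linarith

theorem omegaG_nonneg [Finite V] (hconn : G.Conn) : 0 ≤ G.omegaG :=
  div_nonneg (finsum_nonneg fun σ => G.rho_nonneg hconn σ.2) zero_le_two

theorem omegaG_eq [DecidableEq C] [Finite V] (hC : 2 ≤ Fintype.card C)
    (hconn : G.Conn) :
    G.omegaG = ((Fintype.card C - 1).factorial * (2 + (Fintype.card C - 2) * Nat.card V / 2) -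
      (Fintype.card C - 2).factorial *
        ∑ r, ∑ s, if r = s then 0 else (G.g {r, s} : ℚ)) / 4 := by
  classical
  have hsum := sum_isCyclicPerm_sum_apply fun c s => (G.g {c, s} : ℚ)
  rw [omegaG, finsum_eq_sum_of_fintype,
    ← Finset.sum_subtype {σ : Perm C | IsCyclicPerm σ} (by simp) (fun σ => G.rho σ)]
  simp_rw [G.rho_eq hconn]
  rw [← Finset.sum_div, Finset.sum_sub_distrib, Finset.sum_const, card_filter_isCyclicPerm hC,
    hsum, nsmul_eq_mul, nsmul_eq_mul]
  ring

end Genus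

end CGraph

open CGraph in
/-- Proposition `general G-degree`: for a `(d+1)`-colored graph of order `2p`
(`d ≥ 2`), `ω_G(Γ) = ((d−1)!/2)·(d + (d/2)(d−1)p − Σ_{{r,s}} g_{rs})`, the sum over unordered
pairs of distinct colors (written below as half the sum over ordered pairs of distinct colors);
consequently, for `d ≥ 3` the G-degree is a non-negative integer multiple of `(d−1)!/2`. -/
theorem stmt0 {d p : ℕ} (hd : 2 ≤ d) {V : Type} [Finite V]
    (G : CGraph (Fin (d + 1)) V) (hconn : G.Conn) (horder : Nat.card V = 2 * p) :
    G.omegaG = ((d - 1).factorial : ℚ) / 2 *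
        ((d : ℚ) + (d : ℚ) / 2 * ((d : ℚ) - 1) * (p : ℚ) -
          (∑ r : Fin (d + 1), ∑ s : Fin (d + 1),
            if r = s then 0 else (G.g {r, s} : ℚ)) / 2) ∧
      (3 ≤ d → ∃ k : ℕ, G.omegaG = (k : ℚ) * (((d - 1).factorial : ℚ) / 2)) := by
  obtain ⟨A, hA⟩ := even_sum_sum_ite_of_symm (fun r s : Fin (d + 1) => G.g {r, s})
    fun r s => by rw [Set.pair_comm]
  have hS : (∑ r : Fin (d + 1), ∑ s : Fin (d + 1), if r = s then 0 else (G.g {r, s} : ℚ)) =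
      2 * A := by
    rw [two_mul]
    exact_mod_cast hA
  have hfact : (d.factorial : ℚ) = d * (d - 1).factorial := by
    exact_mod_cast (Nat.mul_factorial_pred (by omega)).symm
  have hω : G.omegaG = ((d - 1).factorial : ℚ) / 2 * (d + d / 2 * (d - 1) * p - 2 * A / 2) := by
    rw [G.omegaG_eq (by simp; omega) hconn, Fintype.card_fin, horder,
      show d + 1 - 2 = d - 1 by omega, Nat.add_sub_cancel, hfact, hS]
    push_cast
    ring
  refine ⟨by rw [hω, hS], fun _ => ?_⟩
  have hz :
      (d + d / 2 * (d - 1) * p - 2 * A / 2 : ℚ) = ((d + d.choose 2 * p - A : ℤ) : ℚ) := by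
    push_cast [Nat.cast_choose_two]
    ring
  obtain ⟨k, hk⟩ := Int.eq_ofNat_of_zero_le (a := d + d.choose 2 * p - A) <| by
    have h := G.omegaG_nonneg hconn
    rw [hω, hz] at h
    exact_mod_cast nonneg_of_mul_nonneg_right h (by positivity)
  exact ⟨k, by rw [hω, hz, hk, mul_comm, Int.cast_natCast]⟩
end

section
/- Let d ≥ 2 and let (Γ,γ) and (Γ′,γ′) be two (d+1)-colored graphs. Then for every vertex v ∈ V(Γ) and every vertex v′ ∈ V(Γ′), the graph connected sum satisfies ω_G(Γ #_{vv′} Γ′) = ω_G(Γ) + ω_G(Γ′). -/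
namespace CGraph

variable {C V V' : Type}

/-- auxiliary: the color-`c` involution of the graph connected sum `Γ #_{v v'} Γ'`:
the vertices `v, v'` are deleted and, for each color `c`, the `c`-colored half-edge left
hanging at the former `c`-neighbor of `v` is welded to the one hanging at the former
`c`-neighbor of `v'`. -/
def connSumInv [DecidableEq V] [DecidableEq V'] (G : CGraph C V) (G' : CGraph C V')
    (v : V) (v' : V') (c : C) :
    ({w : V // w ≠ v} ⊕ {w : V' // w ≠ v'}) → ({w : V // w ≠ v} ⊕ {w : V' // w ≠ v'})
  | Sum.inl w =>
      if h : G.inv c w.val = v then Sum.inr ⟨G'.inv c v', G'.no_fixed c v'⟩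
      else Sum.inl ⟨G.inv c w.val, h⟩
  | Sum.inr w =>
      if h : G'.inv c w.val = v' then Sum.inl ⟨G.inv c v, G.no_fixed c v⟩
      else Sum.inr ⟨G'.inv c w.val, h⟩

/-- the graph connected sum `Γ #_{v v'} Γ'` of two colored graphs with the same color set. -/
def connSum [DecidableEq V] [DecidableEq V'] (G : CGraph C V) (G' : CGraph C V')
    (v : V) (v' : V') : CGraph C ({w : V // w ≠ v} ⊕ {w : V' // w ≠ v'}) where
  inv := connSumInv G G' v v'
  invol c x := by
    rcases x with w | w
    · by_cases h : G.inv c w.val = v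
      · have h2 : G'.inv c (G'.inv c v') = v' := G'.invol c v'
        have h3 : G.inv c v = w.val := by
          conv_lhs => rw [← h]
          exact G.invol c w.val
        simp only [connSumInv, dif_pos h, dif_pos h2]
        exact congrArg Sum.inl (Subtype.ext h3)
      · have h2 : G.inv c (G.inv c w.val) ≠ v := by
          rw [G.invol]; exact w.property
        simp only [connSumInv, dif_neg h, dif_neg h2]
        exact congrArg Sum.inl (Subtype.ext (G.invol c w.val))
    · by_cases h : G'.inv c w.val = v'
      · have h2 : G.inv c (G.inv c v) = v := G.invol c v
        have h3 : G'.inv c v' = w.val := by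
          conv_lhs => rw [← h]
          exact G'.invol c w.val
        simp only [connSumInv, dif_pos h, dif_pos h2]
        exact congrArg Sum.inr (Subtype.ext h3)
      · have h2 : G'.inv c (G'.inv c w.val) ≠ v' := by
          rw [G'.invol]; exact w.property
        simp only [connSumInv, dif_neg h, dif_neg h2]
        exact congrArg Sum.inr (Subtype.ext (G'.invol c w.val))
  no_fixed c x := by
    rcases x with w | w
    · by_cases h : G.inv c w.val = v
      · simp only [connSumInv, dif_pos h]
        exact fun hh => by cases hh
      · simp only [connSumInv, dif_neg h]
        intro hh
        exact G.no_fixed c w.val (congrArg Subtype.val (Sum.inl.inj hh))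
    · by_cases h : G'.inv c w.val = v'
      · simp only [connSumInv, dif_pos h]
        exact fun hh => by cases hh
      · simp only [connSumInv, dif_neg h]
        intro hh
        exact G'.no_fixed c w.val (congrArg Subtype.val (Sum.inr.inj hh))

end CGraph

/-!
Deleting `v`, `v'` and welding the hanging edges lowers the order by `2` and, for every nonempty
set `B` of colors, the number of `B`-components by exactly `1`: the components of `v` and `v'`
merge and nothing else changes. The merged part is connected because any two `B`-neighbours of
`v'` are joined by a path avoiding `v'`, inside the bicolored cycle through `v'`. Hence
`χ_ε(Γ #_{vv'} Γ') = χ_ε(Γ) + χ_ε(Γ') - 2` and `g_{Δ_d}` drops by one, so every `ρ_ε`, and with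
them `ω_G`, is additive.
-/

theorem Finset.even_card_of_involutive {α : Type*} {f : α → α} (hf : Function.Involutive f)
    (hfix : ∀ x, f x ≠ x) {s : Finset α} (hs : ∀ x ∈ s, f x ∈ s) : Even s.card := by
  rw [← ZMod.natCast_eq_zero_iff_even, Finset.card_eq_sum_ones, Nat.cast_sum, Nat.cast_one]
  exact Finset.sum_involution (fun x _ => f x) (fun _ _ => by decide) (fun x _ _ => hfix x) hs
    (fun x _ => hf x)

theorem Nat.card_subtype_ne_add_one {α : Type*} [Finite α] (a : α) :
    Nat.card {x // x ≠ a} + 1 = Nat.card α := by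
  classical
  rw [← Finite.card_option, Nat.card_congr (Equiv.optionSubtypeNe a)]

open scoped Classical in
noncomputable def Sum.mergeInr {α β : Type*} (a : α) (b : β) (x : α ⊕ β) :
    {x : α ⊕ β // x ≠ .inr b} :=
  if h : x = .inr b then ⟨.inl a, Sum.inl_ne_inr⟩ else ⟨x, h⟩

theorem Sum.mergeInr_inr_self {α β : Type*} (a : α) (b : β) :
    Sum.mergeInr a b (.inr b) = ⟨.inl a, Sum.inl_ne_inr⟩ := dif_pos rfl

theorem Sum.mergeInr_of_ne {α β : Type*} (a : α) {b : β} {x : α ⊕ β} (h : x ≠ .inr b) :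
    Sum.mergeInr a b x = ⟨x, h⟩ := dif_neg h

/-- For two perfect matchings `a`, `b`, a map `φ` constant along the edges avoiding `v` agrees on
the two neighbours of `v`: they are joined by a path avoiding `v`. -/
theorem neighbors_connected_off_vertex {V β : Type*} [Finite V] {a b : V → V}
    (ha : Function.Involutive a) (hb : Function.Involutive b)
    (hfa : ∀ x, a x ≠ x) (hfb : ∀ x, b x ≠ x) (v : V) (φ : {x // x ≠ v} → β)
    (hφa : ∀ (x : {x // x ≠ v}) (h : a x ≠ v), φ ⟨a x, h⟩ = φ x)
    (hφb : ∀ (x : {x // x ≠ v}) (h : b x ≠ v), φ ⟨b x, h⟩ = φ x) :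
    φ ⟨a v, hfa v⟩ = φ ⟨b v, hfb v⟩ := by
  classical
  have := Fintype.ofFinite V
  by_contra hne
  -- Otherwise the component `K` of `a v` would be closed under `b`, and `K \ {a v}` under `a`:
  -- both would have even size.
  set K := Finset.univ.filter fun x => ∃ h : x ≠ v, φ ⟨x, h⟩ = φ ⟨a v, hfa v⟩
  have hav : a v ∈ K := by simp [K, hfa v]
  have hKb : ∀ x ∈ K, b x ∈ K := by
    simp only [K, Finset.mem_filter, Finset.mem_univ, true_and]
    rintro x ⟨hx, hφx⟩
    have hbx : b x ≠ v := by
      rintro h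
      obtain rfl := hb.eq_iff.mp h
      exact hne hφx.symm
    exact ⟨hbx, (hφb ⟨x, hx⟩ hbx).trans hφx⟩
  have hKa : ∀ x ∈ K.erase (a v), a x ∈ K.erase (a v) := by
    simp only [K, Finset.mem_erase, Finset.mem_filter, Finset.mem_univ, true_and]
    rintro x ⟨hxa, hx, hφx⟩
    have hax : a x ≠ v := fun h => hxa (ha.eq_iff.mp h)
    exact ⟨fun h => hx (ha.injective h), hax, (hφa ⟨x, hx⟩ hax).trans hφx⟩
  have hcard := Finset.card_erase_add_one hav
  have := Finset.even_card_of_involutive hb hfb hKb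
  have := Finset.even_card_of_involutive ha hfa hKa
  grind

namespace CGraph

section Components

variable {C V : Type}

def componentSetoid (G : CGraph C V) (B : Set C) : Setoid V :=
  Relation.EqvGen.setoid fun x y => ∃ c ∈ B, G.inv c x = y

abbrev Components (G : CGraph C V) (B : Set C) : Type := Quotient (G.componentSetoid B)

theorem g_eq_card_components (G : CGraph C V) (B : Set C) :
    G.g B = Nat.card (G.Components B) := rfl

variable {G : CGraph C V} {B : Set C}

theorem mk_inv {c : C} (hc : c ∈ B) (x : V) :
    (⟦G.inv c x⟧ : G.Components B) = ⟦x⟧ :=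
  Quotient.sound (Relation.EqvGen.symm _ _ (Relation.EqvGen.rel _ _ ⟨c, hc, rfl⟩))

def Components.lift {β : Type*} (f : V → β) (hf : ∀ c ∈ B, ∀ x, f (G.inv c x) = f x) :
    G.Components B → β :=
  Quotient.lift f fun x y hxy =>
    Setoid.eqvGen_le (s := Setoid.ker f) (by rintro x y ⟨c, hc, rfl⟩; exact (hf c hc x).symm) hxy

@[simp]
theorem Components.lift_mk {β : Type*} (f : V → β) (hf : ∀ c ∈ B, ∀ x, f (G.inv c x) = f x)
    (x : V) : Components.lift f hf ⟦x⟧ = f x := rfl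

end Components

theorem card_connSum_vertices {V V' : Type} [Finite V] [Finite V'] (v : V) (v' : V') :
    (Nat.card ({w : V // w ≠ v} ⊕ {w : V' // w ≠ v'}) : ℚ) = Nat.card V + Nat.card V' - 2 := by
  rw [Nat.card_sum, ← Nat.card_subtype_ne_add_one v, ← Nat.card_subtype_ne_add_one v']
  push_cast
  ring

section ConnSum

variable {C V V' : Type} [DecidableEq V] [DecidableEq V'] (G : CGraph C V) (G' : CGraph C V')
  {v : V} {v' : V'} {B : Set C} {c c₀ : C}

theorem connSum_inv_inl_of_ne {w : {w // w ≠ v}} (h : G.inv c w ≠ v) :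
    (G.connSum G' v v').inv c (.inl w) = .inl ⟨G.inv c w, h⟩ := dif_neg h

theorem connSum_inv_inl_of_eq {w : {w // w ≠ v}} (h : G.inv c w = v) :
    (G.connSum G' v v').inv c (.inl w) = .inr ⟨G'.inv c v', G'.no_fixed c v'⟩ := dif_pos h

theorem connSum_inv_inr_of_ne {w : {w // w ≠ v'}} (h : G'.inv c w ≠ v') :
    (G.connSum G' v v').inv c (.inr w) = .inr ⟨G'.inv c w, h⟩ := dif_neg h

theorem connSum_inv_inr_of_eq {w : {w // w ≠ v'}} (h : G'.inv c w = v') :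
    (G.connSum G' v v').inv c (.inr w) = .inl ⟨G.inv c v, G.no_fixed c v⟩ := dif_pos h

theorem connSum_mk_inl_neighbor (hc : c ∈ B) :
    (⟦.inl ⟨G.inv c v, G.no_fixed c v⟩⟧ : (G.connSum G' v v').Components B) =
      ⟦.inr ⟨G'.inv c v', G'.no_fixed c v'⟩⟧ := by
  rw [← connSum_inv_inl_of_eq G G' (w := ⟨_, G.no_fixed c v⟩) (G.invol c v), mk_inv hc]

theorem connSum_mk_inr_neighbor [Finite V'] {c' : C} (hc : c ∈ B) (hc' : c' ∈ B) :
    (⟦.inr ⟨G'.inv c v', G'.no_fixed c v'⟩⟧ : (G.connSum G' v v').Components B) =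
      ⟦.inr ⟨G'.inv c' v', G'.no_fixed c' v'⟩⟧ :=
  neighbors_connected_off_vertex (G'.invol c) (G'.invol c') (G'.no_fixed c) (G'.no_fixed c') v'
    (fun w => (⟦.inr w⟧ : (G.connSum G' v v').Components B))
    (fun _ h => by rw [← connSum_inv_inr_of_ne G G' h, mk_inv hc])
    (fun _ h => by rw [← connSum_inv_inr_of_ne G G' h, mk_inv hc'])

def connSumToComponents (v : V) (v' : V') (B : Set C)
    (x : {w : V // w ≠ v} ⊕ {w : V' // w ≠ v'}) : G.Components B ⊕ G'.Components B :=
  x.map (fun w => ⟦w.1⟧) (fun w => ⟦w.1⟧)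

theorem mergeInr_connSumToComponents_inv (hc : c ∈ B)
    (x : {w : V // w ≠ v} ⊕ {w : V' // w ≠ v'}) :
    Sum.mergeInr ⟦v⟧ ⟦v'⟧ (connSumToComponents G G' v v' B ((G.connSum G' v v').inv c x)) =
      Sum.mergeInr ⟦v⟧ ⟦v'⟧ (connSumToComponents G G' v v' B x) := by
  rcases x with w | w
  · by_cases h : G.inv c w = v
    · have hw : (⟦w.1⟧ : G.Components B) = ⟦v⟧ := (mk_inv hc _).symm.trans (congrArg _ h)
      rw [connSum_inv_inl_of_eq G G' h]
      simp only [connSumToComponents, Sum.map_inl, Sum.map_inr]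
      rw [mk_inv hc, hw, Sum.mergeInr_inr_self, Sum.mergeInr_of_ne _ Sum.inl_ne_inr]
    · simp only [connSum_inv_inl_of_ne G G' h, connSumToComponents, Sum.map_inl, mk_inv hc]
  · by_cases h : G'.inv c w = v'
    · have hw : (⟦w.1⟧ : G'.Components B) = ⟦v'⟧ := (mk_inv hc _).symm.trans (congrArg _ h)
      rw [connSum_inv_inr_of_eq G G' h]
      simp only [connSumToComponents, Sum.map_inl, Sum.map_inr]
      rw [mk_inv hc, hw, Sum.mergeInr_inr_self, Sum.mergeInr_of_ne _ Sum.inl_ne_inr]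
    · simp only [connSum_inv_inr_of_ne G G' h, connSumToComponents, Sum.map_inr, mk_inv hc]

/-- `v` goes to the component of the welded edges, which is unique by `connSum_mk_inl_neighbor`
and `connSum_mk_inr_neighbor`; `c₀` only serves to name it. -/
def leftToConnSumComponents (v : V) (v' : V') (B : Set C) (c₀ : C) (w : V) :
    (G.connSum G' v v').Components B :=
  if h : w = v then ⟦.inr ⟨G'.inv c₀ v', G'.no_fixed c₀ v'⟩⟧ else ⟦.inl ⟨w, h⟩⟧

def rightToConnSumComponents (v : V) (v' : V') (B : Set C) (c₀ : C) (w : V') :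
    (G.connSum G' v v').Components B :=
  if h : w = v' then ⟦.inr ⟨G'.inv c₀ v', G'.no_fixed c₀ v'⟩⟧ else ⟦.inr ⟨w, h⟩⟧

@[simp]
theorem leftToConnSumComponents_self :
    leftToConnSumComponents G G' v v' B c₀ v = ⟦.inr ⟨G'.inv c₀ v', G'.no_fixed c₀ v'⟩⟧ :=
  dif_pos rfl

@[simp]
theorem leftToConnSumComponents_of_ne {w : V} (h : w ≠ v) :
    leftToConnSumComponents G G' v v' B c₀ w = ⟦.inl ⟨w, h⟩⟧ :=
  dif_neg h

@[simp]
theorem rightToConnSumComponents_self :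
    rightToConnSumComponents G G' v v' B c₀ v' = ⟦.inr ⟨G'.inv c₀ v', G'.no_fixed c₀ v'⟩⟧ :=
  dif_pos rfl

@[simp]
theorem rightToConnSumComponents_of_ne {w : V'} (h : w ≠ v') :
    rightToConnSumComponents G G' v v' B c₀ w = ⟦.inr ⟨w, h⟩⟧ :=
  dif_neg h

variable [Finite V']

theorem leftToConnSumComponents_inv (hc₀ : c₀ ∈ B) (hc : c ∈ B) (x : V) :
    leftToConnSumComponents G G' v v' B c₀ (G.inv c x) =
      leftToConnSumComponents G G' v v' B c₀ x := by
  have hweld := (connSum_mk_inl_neighbor G G' (v := v) (v' := v') hc).trans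
    (connSum_mk_inr_neighbor G G' hc hc₀)
  by_cases hx : x = v
  · subst hx
    rw [leftToConnSumComponents_of_ne _ _ (G.no_fixed c x), leftToConnSumComponents_self, hweld]
  · by_cases hy : G.inv c x = v
    · obtain rfl : x = G.inv c v := by rw [← hy, G.invol]
      rw [hy, leftToConnSumComponents_self, leftToConnSumComponents_of_ne _ _ hx, hweld]
    · rw [leftToConnSumComponents_of_ne _ _ hy, leftToConnSumComponents_of_ne _ _ hx,
        ← connSum_inv_inl_of_ne G G' (w := ⟨x, hx⟩) hy, mk_inv hc]

theorem rightToConnSumComponents_inv (hc₀ : c₀ ∈ B) (hc : c ∈ B) (x : V') :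
    rightToConnSumComponents G G' v v' B c₀ (G'.inv c x) =
      rightToConnSumComponents G G' v v' B c₀ x := by
  have hweld := connSum_mk_inr_neighbor G G' (v := v) (v' := v') hc hc₀
  by_cases hx : x = v'
  · subst hx
    rw [rightToConnSumComponents_of_ne _ _ (G'.no_fixed c x), rightToConnSumComponents_self,
      hweld]
  · by_cases hy : G'.inv c x = v'
    · rw [hy, rightToConnSumComponents_self, rightToConnSumComponents_of_ne _ _ hx,
        ← mk_inv (G := G.connSum G' v v') hc (.inr ⟨x, hx⟩), connSum_inv_inr_of_eq G G' hy,
        connSum_mk_inl_neighbor G G' hc, hweld]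
    · rw [rightToConnSumComponents_of_ne _ _ hy, rightToConnSumComponents_of_ne _ _ hx,
        ← connSum_inv_inr_of_ne G G' (w := ⟨x, hx⟩) hy, mk_inv hc]

variable (v v')

/-- The component of `v'` is merged into that of `v`. -/
noncomputable def connSumComponentsEquiv (hc₀ : c₀ ∈ B) :
    (G.connSum G' v v').Components B ≃
      {x : G.Components B ⊕ G'.Components B // x ≠ .inr ⟦v'⟧} where
  toFun := Components.lift (fun x => Sum.mergeInr ⟦v⟧ ⟦v'⟧ (connSumToComponents G G' v v' B x))
    fun _ hc x => mergeInr_connSumToComponents_inv G G' hc x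
  invFun y := y.1.elim
    (Components.lift (leftToConnSumComponents G G' v v' B c₀)
      fun _ hc => leftToConnSumComponents_inv G G' hc₀ hc)
    (Components.lift (rightToConnSumComponents G G' v v' B c₀)
      fun _ hc => rightToConnSumComponents_inv G G' hc₀ hc)
  left_inv q := by
    induction q using Quotient.inductionOn with
    | h x =>
    rcases x with ⟨w, hw⟩ | ⟨w, hw⟩
    · simp [connSumToComponents, Sum.mergeInr_of_ne, hw]
    · by_cases h : (⟦w⟧ : G'.Components B) = ⟦v'⟧
      · have hweld := congrArg (Components.lift (rightToConnSumComponents G G' v v' B c₀)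
          fun _ hc => rightToConnSumComponents_inv G G' hc₀ hc) h
        simp only [Components.lift_mk, rightToConnSumComponents_of_ne _ _ hw,
          rightToConnSumComponents_self] at hweld
        show Sum.elim _ _ (Sum.mergeInr ⟦v⟧ ⟦v'⟧ (.inr ⟦w⟧)).1 = _
        rw [h, Sum.mergeInr_inr_self]
        exact (leftToConnSumComponents_self G G').trans hweld.symm
      · have hne : (.inr ⟦w⟧ : G.Components B ⊕ G'.Components B) ≠ .inr ⟦v'⟧ :=
          fun e => h (Sum.inr_injective e)
        simp [connSumToComponents, Sum.mergeInr_of_ne _ hne, hw]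
  right_inv := by
    rintro ⟨q | q, hq⟩
    · induction q using Quotient.inductionOn with
      | h w =>
      by_cases hw : w = v
      · subst hw
        simp [connSumToComponents, mk_inv hc₀, Sum.mergeInr_inr_self]
      · simp [connSumToComponents, Sum.mergeInr_of_ne, hw]
    · induction q using Quotient.inductionOn with
      | h w =>
      have hw : w ≠ v' := fun h => hq (by rw [h])
      simp [connSumToComponents, Sum.mergeInr_of_ne _ hq, hw]

variable [Finite V]

theorem g_connSum (hB : B.Nonempty) : (G.connSum G' v v').g B + 1 = G.g B + G'.g B := by
  obtain ⟨c₀, hc₀⟩ := hB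
  rw [g_eq_card_components, Nat.card_congr (connSumComponentsEquiv G G' v v' hc₀),
    Nat.card_subtype_ne_add_one, Nat.card_sum, g_eq_card_components, g_eq_card_components]

theorem chi_connSum [Finite C] (σ : Equiv.Perm C) :
    (G.connSum G' v v').chi σ = G.chi σ + G'.chi σ - 2 := by
  have := Fintype.ofFinite C
  have hg (c : C) :
      ((G.connSum G' v v').g {c, σ c} : ℚ) = G.g {c, σ c} + G'.g {c, σ c} - 1 := by
    rw [eq_sub_iff_add_eq]
    exact_mod_cast g_connSum G G' v v' (Set.insert_nonempty c {σ c})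
  simp only [chi, finsum_eq_sum_of_fintype, hg, Finset.sum_sub_distrib, Finset.sum_add_distrib,
    Finset.sum_const, Finset.card_univ, card_connSum_vertices, Nat.card_eq_fintype_card,
    nsmul_eq_mul, mul_one]
  ring

theorem rho_connSum [Finite C] [Nonempty C] (σ : Equiv.Perm C) :
    (G.connSum G' v v').rho σ = G.rho σ + G'.rho σ := by
  have hg : ((G.connSum G' v v').g Set.univ : ℚ) = G.g Set.univ + G'.g Set.univ - 1 := by
    rw [eq_sub_iff_add_eq]
    exact_mod_cast g_connSum G G' v v' Set.univ_nonempty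
  simp only [rho, chi_connSum, hg]
  ring

theorem omegaG_connSum [Finite C] [Nonempty C] :
    (G.connSum G' v v').omegaG = G.omegaG + G'.omegaG := by
  simp only [omegaG, rho_connSum]
  rw [finsum_add_distrib (Set.toFinite _) (Set.toFinite _), add_div]

end ConnSum

end CGraph

open CGraph in
theorem stmt3_general {d : ℕ} {V V' : Type} [Finite V] [Finite V']
    [DecidableEq V] [DecidableEq V']
    (G : CGraph (Fin (d + 1)) V) (G' : CGraph (Fin (d + 1)) V')
    (v : V) (v' : V') :
    (G.connSum G' v v').omegaG = G.omegaG + G'.omegaG :=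
  omegaG_connSum G G' v v'

open CGraph in
/-- Proposition `prop:combCsum`: the G-degree is additive with respect to
graph connected sums: `ω_G(Γ #_{vv'} Γ') = ω_G(Γ) + ω_G(Γ')`. -/
theorem stmt3 {d : ℕ} (hd : 2 ≤ d) {V V' : Type} [Finite V] [Finite V']
    [DecidableEq V] [DecidableEq V']
    (G : CGraph (Fin (d + 1)) V) (G' : CGraph (Fin (d + 1)) V')
    (hconn : G.Conn) (hconn' : G'.Conn) (v : V) (v' : V') :
    (G.connSum G' v v').omegaG = G.omegaG + G'.omegaG :=
  stmt3_general G G' v v'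
end

section
/- If (Γ,γ) is a 4-colored graph of order 2p, then ω_G(Γ) = p − 1 − Σ_{i∈Δ₃}(g_{î} − 1) + χ(K(Γ)), where χ(K(Γ)) = Σ_{i∈Δ₃} g_{î} − Σ_{{i,j}} g_{ij} + 2p is the Euler characteristic of the associated 3-dimensional pseudocomplex (the second sum ranging over the six unordered pairs of distinct colors in Δ₃). -/
/-!
Every ordered pair `(r, s)` of distinct colours occurs as a consecutive pair `(c, σ c)` in exactly
two of the six cyclic permutations `σ` of `Fin 4`. Summing `ρ_σ = 1 + p - ½ Σ_c g_{c σc}` over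
them therefore gives `2 ω_G = 6 + 6p - Σ_{r ≠ s} g_{rs}`, and the `g_î` cancel on the right.
-/

open Finset in
lemma Finset.sum_sum_perm_apply_eq_sum_card_smul {C M : Type} [Fintype C] [DecidableEq C]
    [AddCommMonoid M] (S : Finset (Equiv.Perm C)) (F : C → C → M) :
    ∑ σ ∈ S, ∑ c, F c (σ c) = ∑ r, ∑ s, #{σ ∈ S | σ r = s} • F r s := by
  rw [sum_comm]
  refine sum_congr rfl fun r _ => ?_
  rw [← sum_fiberwise S (fun σ => σ r)]
  refine sum_congr rfl fun s _ => ?_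
  rw [← sum_const]
  exact sum_congr rfl fun σ hσ => by rw [(mem_filter.1 hσ).2]

namespace CGraph

open Finset

variable {C V : Type}

instance [Fintype C] [DecidableEq C] : DecidablePred (IsCyclicPerm (C := C)) := fun σ =>
  decidable_of_iff ((∃ x, σ x ≠ x ∧ ∀ y, σ y ≠ y → σ.SameCycle x y) ∧ ∀ c, σ c ≠ c) Iff.rfl

def cyclicPerms (C : Type) [Fintype C] [DecidableEq C] : Finset (Equiv.Perm C) :=
  univ.filter IsCyclicPerm

lemma omegaG_eq_sum_cyclicPerms [Fintype C] [DecidableEq C] (G : CGraph C V) :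
    G.omegaG = (∑ σ ∈ cyclicPerms C, G.rho σ) / 2 := by
  rw [omegaG, finsum_eq_sum_of_fintype,
    sum_subtype (p := IsCyclicPerm) (cyclicPerms C) (fun σ => by simp [cyclicPerms]) G.rho]

lemma rho_of_conn {G : CGraph C V} (hG : G.Conn) (σ : Equiv.Perm C) :
    G.rho σ = 1 - G.chi σ / 2 := by
  rw [rho, hG]
  ring

lemma chi_eq_sum [Fintype C] (G : CGraph C V) (σ : Equiv.Perm C) :
    G.chi σ = ∑ c, (G.g {c, σ c} : ℚ) + (2 - Fintype.card C) * (Nat.card V / 2) := by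
  rw [chi, finsum_eq_sum_of_fintype, Nat.card_eq_fintype_card]

lemma card_cyclicPerms_fin_four : #(cyclicPerms (Fin 4)) = 6 := by
  decide

lemma card_filter_cyclicPerms_apply_eq_fin_four (r s : Fin 4) :
    #{σ ∈ cyclicPerms (Fin 4) | σ r = s} = if r = s then 0 else 2 := by
  revert r s
  decide

lemma sum_cyclicPerms_sum_apply_fin_four {M : Type} [AddCommMonoid M] (F : Fin 4 → Fin 4 → M) :
    ∑ σ ∈ cyclicPerms (Fin 4), ∑ c, F c (σ c) =
      2 • ∑ r, ∑ s, if r = s then 0 else F r s := by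
  simp only [sum_sum_perm_apply_eq_sum_card_smul, card_filter_cyclicPerms_apply_eq_fin_four,
    smul_sum, ite_smul, zero_smul, smul_ite, smul_zero]

end CGraph

open CGraph in
theorem stmt7_general {p : ℕ} {V : Type}
    (G : CGraph (Fin 4) V) (hconn : G.Conn) (horder : Nat.card V = 2 * p) :
    G.omegaG = (p : ℚ) - 1 - (∑ i : Fin 4, ((G.g {c | c ≠ i} : ℚ) - 1)) +
      ((∑ i : Fin 4, (G.g {c | c ≠ i} : ℚ)) -
        (∑ r : Fin 4, ∑ s : Fin 4, if r = s then 0 else (G.g {r, s} : ℚ)) / 2 +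
        2 * (p : ℚ)) := by
  have hpairs := sum_cyclicPerms_sum_apply_fin_four fun r s => (G.g {r, s} : ℚ)
  simp only [omegaG_eq_sum_cyclicPerms, rho_of_conn hconn, chi_eq_sum, horder,
    Finset.sum_sub_distrib, Finset.sum_add_distrib, ← Finset.sum_div, hpairs,
    Finset.sum_const, card_cyclicPerms_fin_four, Finset.card_univ, Fintype.card_fin]
  push_cast
  ring

open CGraph in
/-- Proposition `G-degree(n=3)`, first part: for a 4-colored graph of order
`2p`, `ω_G(Γ) = p − 1 − Σ_{i∈Δ₃}(g_î − 1) + χ(K(Γ))`, where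
`χ(K(Γ)) = Σ_i g_î − Σ_{{i,j}} g_{ij} + 2p` (the pair sum over the six unordered pairs of
distinct colors is written as half the sum over ordered pairs of distinct colors). -/
theorem stmt7 {p : ℕ} {V : Type} [Finite V]
    (G : CGraph (Fin 4) V) (hconn : G.Conn) (horder : Nat.card V = 2 * p) :
    G.omegaG = (p : ℚ) - 1 - (∑ i : Fin 4, ((G.g {c | c ≠ i} : ℚ) - 1)) +
      ((∑ i : Fin 4, (G.g {c | c ≠ i} : ℚ)) -
        (∑ r : Fin 4, ∑ s : Fin 4, if r = s then 0 else (G.g {r, s} : ℚ)) / 2 +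
        2 * (p : ℚ)) :=
  stmt7_general G hconn horder
end
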